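/- Consistent Neumann boundary condition for the updated pressure: Under the hypotheses of the consistency theorem for the shear-rate projection splitting (prediction equation for ũ with viscosity field b and old pressure p; velocity correction u = ũ − (2Δt/(3ρ))∇φ; correction equation ∇ψ = ∇·(2a D(u)) − ∇·(2b D(ũ)); updated pressure q = p + φ + ψ), for every point x ∈ Ω and every vector n ∈ ℝ^d, one has ⟨∇q(x), n⟩ = ⟨f(x) − ρ(3u − 4uⁿ + uⁿ⁻¹)(x)/(2Δt) − ρ((ũ·∇)ũ)(x) + (∇·(2a D(u)))(x), n⟩. -/

import Mathlib

/-!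
The correction step is designed so that the pressure increments absorb exactly the discrepancy
between the two momentum equations: since `2Δt/(3ρ)` is the inverse of the BDF2 coefficient
`3ρ/(2Δt)`, replacing `ũ` by `u` in the discrete time derivative costs exactly `∇φ`, and `∇ψ`
trades the viscous term `∇·(2b D(ũ))` for `∇·(2a D(u))`. Adding both to the prediction equation
gives the boundary condition componentwise, hence after pairing with any `n`.
-/

/-- Partial derivative `∂_j g` of a scalar field on `ℝ^d`. -/
noncomputable def pdiff {d : ℕ} (j : Fin d) (g : (Fin d → ℝ) → ℝ) (x : Fin d → ℝ) : ℝ :=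
  fderiv ℝ g x (Pi.single j 1)

/-- Shear-rate tensor `D(v)_{ij} = (∂_j v_i + ∂_i v_j)/2` of a vector field. -/
noncomputable def shearD {d : ℕ} (v : (Fin d → ℝ) → (Fin d → ℝ)) (i j : Fin d)
    (x : Fin d → ℝ) : ℝ :=
  (pdiff j (fun y => v y i) x + pdiff i (fun y => v y j) x) / 2

theorem pdiff_add {d : ℕ} (j : Fin d) {g h : (Fin d → ℝ) → ℝ} {x : Fin d → ℝ}
    (hg : DifferentiableAt ℝ g x) (hh : DifferentiableAt ℝ h x) :
    pdiff j (fun y => g y + h y) x = pdiff j g x + pdiff j h x := by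
  simp only [pdiff, fderiv_fun_add hg hh, add_apply]

theorem bdf2_sub_of_eq_sub_projection {ρ dt u ut v w g : ℝ} (hρ : ρ ≠ 0) (hdt : dt ≠ 0)
    (hu : u = ut - 2 * dt / (3 * ρ) * g) :
    ρ * (3 * u - 4 * v + w) / (2 * dt) = ρ * (3 * ut - 4 * v + w) / (2 * dt) - g := by
  subst hu
  field_simp
  ring

theorem shear_rate_projection_neumann_general
    (d : ℕ) (Ω : Set (Fin d → ℝ))
    (ρ dt : ℝ) (hρ : 0 < ρ) (hdt : 0 < dt)
    (ut u un un1 : (Fin d → ℝ) → (Fin d → ℝ))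
    (a b : (Fin d → ℝ) → ℝ)
    (p φ ψ : (Fin d → ℝ) → ℝ)
    (f : (Fin d → ℝ) → (Fin d → ℝ))
    (hp : ContDiff ℝ 1 p) (hφ : ContDiff ℝ 1 φ) (hψ : ContDiff ℝ 1 ψ)
    -- (i) prediction equation
    (hpred : ∀ x ∈ Ω, ∀ i,
      ρ * (3 * ut x i - 4 * un x i + un1 x i) / (2 * dt)
        + ρ * (∑ j, ut x j * pdiff j (fun y => ut y i) x)
        - (∑ j, pdiff j (fun y => 2 * b y * shearD ut i j y) x)
        + pdiff i p x = f x i)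
    -- (ii) velocity correction
    (hcorr : ∀ x ∈ Ω, ∀ i,
      u x i = ut x i - (2 * dt / (3 * ρ)) * pdiff i φ x)
    -- (iii) shear-rate correction equation
    (hpsi : ∀ x ∈ Ω, ∀ i,
      pdiff i ψ x = (∑ j, pdiff j (fun y => 2 * a y * shearD u i j y) x)
        - (∑ j, pdiff j (fun y => 2 * b y * shearD ut i j y) x)) :
    ∀ x ∈ Ω, ∀ n : Fin d → ℝ,
      (∑ i, pdiff i (fun y => p y + φ y + ψ y) x * n i)
        = ∑ i, (f x i
            - ρ * (3 * u x i - 4 * un x i + un1 x i) / (2 * dt)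
            - ρ * (∑ j, ut x j * pdiff j (fun y => ut y i) x)
            + (∑ j, pdiff j (fun y => 2 * a y * shearD u i j y) x)) * n i := by
  intro x hx n
  refine Finset.sum_congr rfl fun i _ => congrArg (· * n i) ?_
  have hdp := (hp.differentiable one_ne_zero) x
  have hdφ := (hφ.differentiable one_ne_zero) x
  have hdψ := (hψ.differentiable one_ne_zero) x
  rw [pdiff_add i (g := fun y => p y + φ y) (hdp.add hdφ) hdψ, pdiff_add i hdp hdφ,
    bdf2_sub_of_eq_sub_projection hρ.ne' hdt.ne' (hcorr x hx i)]
  linarith [hpred x hx i, hpsi x hx i]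

/-- Consistent Neumann boundary condition for the updated pressure `q = p + φ + ψ`
of the shear-rate projection scheme: at every point of `Ω` and for every vector `n`,
`⟨∇q, n⟩ = ⟨f - ρ D_t u - ρ (ũ·∇)ũ + ∇·(2a D(u)), n⟩`. -/
theorem shear_rate_projection_neumann
    (d : ℕ) (hd : 1 ≤ d) (Ω : Set (Fin d → ℝ)) (hΩ : IsOpen Ω)
    (ρ dt : ℝ) (hρ : 0 < ρ) (hdt : 0 < dt)
    (ut u un un1 : (Fin d → ℝ) → (Fin d → ℝ))
    (a b : (Fin d → ℝ) → ℝ)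
    (p φ ψ : (Fin d → ℝ) → ℝ)
    (f : (Fin d → ℝ) → (Fin d → ℝ))
    (hut : ContDiff ℝ 2 ut) (hu : ContDiff ℝ 2 u)
    (hun : ContDiff ℝ 2 un) (hun1 : ContDiff ℝ 2 un1)
    (ha : ContDiff ℝ 1 a) (hb : ContDiff ℝ 1 b)
    (hp : ContDiff ℝ 1 p) (hφ : ContDiff ℝ 1 φ) (hψ : ContDiff ℝ 1 ψ)
    -- (i) prediction equation
    (hpred : ∀ x ∈ Ω, ∀ i,
      ρ * (3 * ut x i - 4 * un x i + un1 x i) / (2 * dt)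
        + ρ * (∑ j, ut x j * pdiff j (fun y => ut y i) x)
        - (∑ j, pdiff j (fun y => 2 * b y * shearD ut i j y) x)
        + pdiff i p x = f x i)
    -- (ii) velocity correction
    (hcorr : ∀ x ∈ Ω, ∀ i,
      u x i = ut x i - (2 * dt / (3 * ρ)) * pdiff i φ x)
    -- (iii) shear-rate correction equation
    (hpsi : ∀ x ∈ Ω, ∀ i,
      pdiff i ψ x = (∑ j, pdiff j (fun y => 2 * a y * shearD u i j y) x)
        - (∑ j, pdiff j (fun y => 2 * b y * shearD ut i j y) x)) :
    ∀ x ∈ Ω, ∀ n : Fin d → ℝ,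
      (∑ i, pdiff i (fun y => p y + φ y + ψ y) x * n i)
        = ∑ i, (f x i
            - ρ * (3 * u x i - 4 * un x i + un1 x i) / (2 * dt)
            - ρ * (∑ j, ut x j * pdiff j (fun y => ut y i) x)
            + (∑ j, pdiff j (fun y => 2 * a y * shearD u i j y) x)) * n i :=
  shear_rate_projection_neumann_general d Ω ρ dt hρ hdt ut u un un1 a b p φ ψ f hp hφ hψ hpred hcorr
    hpsi
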